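/- Fix p ∈ (0,1) and M > 4, and set k_n = 2 log_{1/p} n − M log_{1/p} log n. Then C(n, k_n) p^{C(k_n, 2)} → ∞ as n → ∞. -/

import Mathlib

open MeasureTheory ProbabilityTheory Filter

noncomputable section

abbrev EdgeSlot (n : ℕ) := {s : Sym2 (Fin n) // ¬ s.IsDiag}

abbrev ERSpace (n : ℕ) := EdgeSlot n → Bool

/-- The Erdős–Rényi measure: each potential edge present independently with prob `p`. -/
def erMeasure (n : ℕ) (p : ℝ) : Measure (ERSpace n) :=
  Measure.pi fun _ => (PMF.bernoulli (min (Real.toNNReal p) 1) (min_le_right _ _)).toMeasure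

def edgeSlot {n : ℕ} {u v : Fin n} (h : u ≠ v) : EdgeSlot n :=
  ⟨s(u, v), by simpa using h⟩

/-- The graph associated to an outcome of edge indicators. -/
def erGraph {n : ℕ} (ω : ERSpace n) : SimpleGraph (Fin n) where
  Adj u v := ∃ h : u ≠ v, ω (edgeSlot h) = true
  symm := ⟨by
    rintro u v ⟨h, hw⟩
    refine ⟨h.symm, ?_⟩
    have he : edgeSlot h.symm = edgeSlot h := Subtype.ext (Sym2.eq_swap)
    rw [he]; exact hw⟩
  loopless := ⟨by rintro u ⟨h, -⟩; exact h rfl⟩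

/-- Number of `k`-cliques in a graph on a finite vertex set. -/
def cliqueCount {V : Type*} [Fintype V] (G : SimpleGraph V) (k : ℕ) : ℕ :=
  Set.ncard {s : Finset V | G.IsNClique k s}

/-- The tensor (categorical) product of two simple graphs. -/
def tensorProd {α β : Type*} (G : SimpleGraph α) (H : SimpleGraph β) :
    SimpleGraph (α × β) where
  Adj x y := G.Adj x.1 y.1 ∧ H.Adj x.2 y.2
  symm := ⟨fun _ _ ⟨h1, h2⟩ => ⟨h1.symm, h2.symm⟩⟩
  loopless := ⟨fun x h => G.loopless.irrefl x.1 h.1⟩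

instance {α β : Type*} (G : SimpleGraph α) (H : SimpleGraph β)
    [DecidableRel G.Adj] [DecidableRel H.Adj] : DecidableRel (tensorProd G H).Adj :=
  fun _ _ => instDecidableAnd

/-- Number of `k`-cliques contained in the open neighborhood of `w`. -/
def nbhdCliqueCount {V : Type*} [Fintype V] (G : SimpleGraph V) (k : ℕ) (w : V) : ℕ :=
  Set.ncard {s : Finset V | G.IsNClique k s ∧ ∀ x ∈ s, G.Adj w x}

/-- Number of isolated vertices. -/
def isolatedCount {V : Type*} [Fintype V] (K : SimpleGraph V) : ℕ :=
  Set.ncard {v : V | ∀ w, ¬ K.Adj v w}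

end

/-!
Write `k = k_n`. Since `C(n, k) ≥ (n / k) ^ k` and `p ^ C(k, 2) = (√p ^ (k - 1)) ^ k`, the quantity
is at least `b ^ k` with `b = (n / k) √p ^ (k - 1)`. From `k ≤ 2 log_{1/p} n - M log_{1/p} log₂ n`
one gets `log b ≥ (M / 2 - 1) log log₂ n - O(1)`, so `b → ∞` as soon as `M > 2`; as `k ≥ 1`
eventually, `b ^ k ≥ b → ∞`.
-/

open Real

theorem div_pow_le_choose {α : Type*} [Field α] [LinearOrder α] [IsStrictOrderedRing α] :
    ∀ {n k : ℕ}, k ≤ n → ((n : α) / k) ^ k ≤ n.choose k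
  | _, 0, _ => by simp
  | n + 1, k + 1, hkn => by
    have hk : k ≤ n := by omega
    -- `C(n + 1, k + 1) = (n + 1) / (k + 1) * C(n, k)`, and `(n + 1) / (k + 1) ≤ n / k` as `k ≤ n`.
    have hratio : (((n + 1 : ℕ) : α) / (k + 1 : ℕ)) ^ k ≤ ((n : α) / k) ^ k := by
      rcases Nat.eq_zero_or_pos k with rfl | hk0
      · simp
      refine pow_le_pow_left₀ (by positivity) ?_ k
      rw [div_le_div_iff₀ (by positivity) (by positivity)]
      push_cast
      nlinarith [(Nat.cast_le (α := α)).2 hk]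
    have hrec : ((n + 1).choose (k + 1) : α) = ((n + 1 : ℕ) : α) / (k + 1 : ℕ) * n.choose k := by
      rw [div_mul_eq_mul_div, eq_div_iff (by positivity)]
      exact_mod_cast (Nat.add_one_mul_choose_eq n k).symm
    calc (((n + 1 : ℕ) : α) / (k + 1 : ℕ)) ^ (k + 1)
        = ((n + 1 : ℕ) : α) / (k + 1 : ℕ) * (((n + 1 : ℕ) : α) / (k + 1 : ℕ)) ^ k := pow_succ' _ _
      _ ≤ ((n + 1 : ℕ) : α) / (k + 1 : ℕ) * n.choose k := by
        gcongr
        exact hratio.trans (div_pow_le_choose hk)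
      _ = (n + 1).choose (k + 1) := hrec.symm

theorem pow_choose_two_eq_sqrt_pow {p : ℝ} (hp : 0 ≤ p) (k : ℕ) :
    p ^ k.choose 2 = (√p ^ (k - 1)) ^ k := by
  conv_lhs => rw [← sq_sqrt hp]
  rw [← pow_mul, ← pow_mul, Nat.choose_two_right, mul_comm (k - 1),
    Nat.mul_div_cancel' (Nat.even_mul_pred_self k).two_dvd]

theorem div_mul_sqrt_pow_pow_le_choose_mul_pow {p : ℝ} (hp : 0 ≤ p) {n k : ℕ} (hkn : k ≤ n) :
    ((n : ℝ) / k * √p ^ (k - 1)) ^ k ≤ n.choose k * p ^ k.choose 2 := by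
  rw [mul_pow, pow_choose_two_eq_sqrt_pow hp]
  gcongr
  exact div_pow_le_choose hkn

theorem tendsto_mul_sub_mul_log_atTop {c : ℝ} (hc : 0 < c) (M : ℝ) :
    Tendsto (fun x => c * x - M * log x) atTop atTop := by
  have hlog : ∀ᶠ x in atTop, M * log x ≤ c / 2 * x := by
    filter_upwards [(isLittleO_log_id_atTop.const_mul_left M).bound (half_pos hc),
      eventually_ge_atTop 0] with x hx hx0
    simpa [abs_of_nonneg hx0] using (le_abs_self _).trans hx
  refine tendsto_atTop_mono' _ ?_ (tendsto_id.const_mul_atTop (half_pos hc))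
  filter_upwards [hlog] with x hx
  simp only [id]
  linarith

theorem le_log_two_mul_sub_log_sub_of_mul_le {L M x k : ℝ} (hL : 0 < L) (hM : 0 ≤ M)
    (hx : 1 ≤ x) (hk : 0 < k) (hkx : k * L ≤ 2 * log 2 * x - M * log x) :
    (M / 2 - 1) * log x + (L / 2 - log (2 * log 2 / L)) ≤ log 2 * x - log k - (k - 1) * L / 2 := by
  have hlogx : 0 ≤ log x := log_nonneg hx
  have hkle : k ≤ 2 * log 2 / L * x := by
    rw [div_mul_eq_mul_div, le_div_iff₀ hL]
    nlinarith
  have hlogk : log k ≤ log (2 * log 2 / L) + log x := by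
    rw [← log_mul (by positivity) (by positivity)]
    exact log_le_log hk hkle
  linarith

noncomputable def cliqueThreshold (p M : ℝ) (n : ℕ) : ℕ :=
  ⌊2 * logb (1 / p) n - M * logb (1 / p) (logb 2 n)⌋₊

theorem cliqueThreshold_eq (p M : ℝ) (n : ℕ) :
    cliqueThreshold p M n =
      ⌊(2 * log 2 * logb 2 n - M * log (logb 2 n)) / log (1 / p)⌋₊ := by
  have hn : log n = log 2 * logb 2 n := (mul_div_cancel₀ _ (log_pos one_lt_two).ne').symm
  rw [cliqueThreshold, logb, logb, hn]
  ring_nf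

theorem tendsto_cliqueThreshold_atTop {p : ℝ} (hp : p ∈ Set.Ioo 0 1) (M : ℝ) :
    Tendsto (cliqueThreshold p M) atTop atTop := by
  have hL : 0 < log (1 / p) := log_pos (one_lt_one_div hp.1 hp.2)
  have hx : Tendsto (fun n : ℕ => logb 2 n) atTop atTop :=
    (tendsto_logb_atTop one_lt_two).comp tendsto_natCast_atTop_atTop
  refine (tendsto_nat_floor_atTop.comp ?_).congr fun n => (cliqueThreshold_eq p M n).symm
  exact ((tendsto_mul_sub_mul_log_atTop (by positivity) M).comp hx).atTop_div_const hL

theorem cliqueThreshold_mul_log_le {p : ℝ} (hp : p ∈ Set.Ioo 0 1) {M : ℝ} {n : ℕ}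
    (hk : 1 ≤ cliqueThreshold p M n) :
    cliqueThreshold p M n * log (1 / p) ≤ 2 * log 2 * logb 2 n - M * log (logb 2 n) := by
  have hL : 0 < log (1 / p) := log_pos (one_lt_one_div hp.1 hp.2)
  rw [cliqueThreshold_eq] at hk ⊢
  rw [← le_div_iff₀ hL]
  exact Nat.floor_le (by linarith [Nat.floor_pos.1 hk])

theorem tendsto_div_cliqueThreshold_mul_sqrt_pow_atTop {p : ℝ} (hp : p ∈ Set.Ioo 0 1) {M : ℝ}
    (hM : 2 < M) :
    Tendsto (fun n : ℕ => (n : ℝ) / cliqueThreshold p M n * √p ^ (cliqueThreshold p M n - 1))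
      atTop atTop := by
  have hp0 : 0 < p := hp.1
  set L := log (1 / p)
  have hL : 0 < L := log_pos (one_lt_one_div hp.1 hp.2)
  have hx : Tendsto (fun n : ℕ => logb 2 n) atTop atTop :=
    (tendsto_logb_atTop one_lt_two).comp tendsto_natCast_atTop_atTop
  have hlower : Tendsto (fun n : ℕ => exp ((M / 2 - 1) * log (logb 2 n) +
      (L / 2 - log (2 * log 2 / L)))) atTop atTop :=
    tendsto_exp_atTop.comp <| tendsto_atTop_add_const_right _ _ <|
      (tendsto_log_atTop.comp hx).const_mul_atTop (by linarith)
  refine tendsto_atTop_mono' _ ?_ hlower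
  filter_upwards [(tendsto_cliqueThreshold_atTop hp M).eventually_ge_atTop 1,
    hx.eventually_ge_atTop 1] with n hk hxn
  set k := cliqueThreshold p M n
  have hn : (0 : ℝ) < n := Nat.cast_pos.2 (Nat.pos_of_ne_zero fun h => by norm_num [h] at hxn)
  have hk0 : (0 : ℝ) < k := by exact_mod_cast hk
  rw [← le_log_iff_exp_le (by positivity), log_mul (by positivity) (by positivity),
    log_div hn.ne' hk0.ne', log_pow, log_sqrt hp0.le, Nat.cast_sub hk, Nat.cast_one]
  have hlogp : log p = -L := by simp only [L, one_div, log_inv, neg_neg]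
  have hbound := le_log_two_mul_sub_log_sub_of_mul_le hL (by linarith) hxn hk0
    (cliqueThreshold_mul_log_le hp hk)
  rw [show log 2 * logb 2 n = log n from mul_div_cancel₀ _ (log_pos one_lt_two).ne'] at hbound
  rw [hlogp]
  linarith

theorem expected_count_tendsto_atTop (p : ℝ) (hp : p ∈ Set.Ioo (0 : ℝ) 1)
    (M : ℝ) (hM : 4 < M) :
    Filter.Tendsto
      (fun n : ℕ =>
        (Nat.choose n ⌊2 * Real.logb (1 / p) n - M * Real.logb (1 / p) (Real.logb 2 n)⌋₊ : ℝ)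
          * p ^ ((⌊2 * Real.logb (1 / p) n - M * Real.logb (1 / p) (Real.logb 2 n)⌋₊).choose 2))
      Filter.atTop Filter.atTop := by
  have hb := tendsto_div_cliqueThreshold_mul_sqrt_pow_atTop hp (by linarith : 2 < M)
  refine tendsto_atTop_mono' _ ?_ hb
  filter_upwards [(tendsto_cliqueThreshold_atTop hp M).eventually_ge_atTop 1,
    hb.eventually_ge_atTop 1] with n hk hb1
  change _ ≤ (n.choose (cliqueThreshold p M n) : ℝ) * p ^ (cliqueThreshold p M n).choose 2
  set k := cliqueThreshold p M n
  have hkn : k ≤ n := by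
    have hsqrt : √p ^ (k - 1) ≤ 1 := pow_le_one₀ (sqrt_nonneg p) (sqrt_le_one.2 hp.2.le)
    have : (1 : ℝ) ≤ n / k := hb1.trans (mul_le_of_le_one_right (by positivity) hsqrt)
    exact_mod_cast (one_le_div (by positivity)).1 this
  calc _ ≤ ((n : ℝ) / k * √p ^ (k - 1)) ^ k := le_self_pow₀ hb1 (by omega)
    _ ≤ _ := div_mul_sqrt_pow_pow_le_choose_mul_pow hp.1.le hkn
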